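/- Let R be a torsion-free commutative ring, n ≥ 1, and f(u) = Σ_{i≥1} a_i u^i ∈ R[[u]] with a_1 = n. Let g(u) = Σ_{i≥1} b_i u^i ∈ (R ⊗ ℤ[1/n])[[u]] be the compositional inverse of f. Then for every i ≥ 1, the element n^{i(i+1)/2} · b_i lies in the image of R in R ⊗ ℤ[1/n]. -/

import Mathlib

open PowerSeries

/-- Composition `f ∘ g` of formal power series, correct whenever `g` has zero
constant term: the `m`-th coefficient of `f(g(u))` is `∑_{k ≤ m} f_k · (g^k)_m`. -/
noncomputable def PowerSeries.comp' {R : Type*} [CommRing R] (f g : PowerSeries R) :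
    PowerSeries R :=
  PowerSeries.mk fun m => ∑ k ∈ Finset.range (m + 1),
    PowerSeries.coeff (R := R) k f * PowerSeries.coeff (R := R) m (g ^ k)

/-! Comparing coefficients of `u^m` in `f(g(u)) = u` gives
`n · b_m = [m = 1] - ∑_{k ≠ 1} a_k · (g^k)_m`, and for `k ≥ 2` the coefficient `(g^k)_m` only
involves `b_j` with `j < m`. Write `T(j) = j(j+1)/2`. Since `T(p + q) = T(p) + T(q) + pq`,
a product of `k` coefficients `b_{j_i}` with `∑ j_i = m`, each made integral by `n^{T(j_i)}`,
is made integral by `n^{T(m) - (k - 1)}`; for `k ≥ 2` this leaves the spare factor `n`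
needed to divide by `a_1 = n`. -/

theorem Nat.add_mul_add_one_div_two (p q : ℕ) :
    (p + q) * (p + q + 1) / 2 = p * (p + 1) / 2 + q * (q + 1) / 2 + p * q := by
  have hp := Nat.div_two_mul_two_of_even (Nat.even_mul_succ_self p)
  have hq := Nat.div_two_mul_two_of_even (Nat.even_mul_succ_self q)
  refine Nat.div_eq_of_eq_mul_left two_pos ?_
  nlinarith

theorem PowerSeries.coeff_pow_eq_zero_of_lt {A : Type*} [CommSemiring A] {g : A⟦X⟧}
    (hg : constantCoeff g = 0) {k m : ℕ} (h : m < k) : coeff m (g ^ k) = 0 :=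
  X_pow_dvd_iff.1 (pow_dvd_pow_of_dvd (X_dvd_iff.2 hg) k) m h

section
variable {A : Type*} [CommSemiring A] {S : Subsemiring A} {ν : A}

theorem pow_mul_mem_of_le (hν : ν ∈ S) {a b : ℕ} (hab : a ≤ b) {x : A} (hx : ν ^ a * x ∈ S) :
    ν ^ b * x ∈ S := by
  rw [← Nat.sub_add_cancel hab, pow_add, mul_assoc]
  exact S.mul_mem (S.pow_mem hν _) hx

theorem PowerSeries.pow_mul_coeff_pow_mem (hν : ν ∈ S) {g : A⟦X⟧} (hg0 : constantCoeff g = 0)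
    {N : ℕ} (hg : ∀ j ≤ N, ν ^ (j * (j + 1) / 2) * coeff j g ∈ S) {k : ℕ} (hk : 1 ≤ k) :
    ∀ m < N + k, ν ^ (m * (m + 1) / 2 + 1 - k) * coeff m (g ^ k) ∈ S := by
  induction k, hk using Nat.le_induction with
  | base => simpa using fun m hm => hg m (by omega)
  | succ k hk ih =>
    intro m hm
    rw [pow_succ, coeff_mul, Finset.mul_sum]
    refine S.sum_mem fun ⟨p, q⟩ hpq => ?_
    obtain rfl : p + q = m := Finset.HasAntidiagonal.mem_antidiagonal.1 hpq
    obtain rfl | hq := Nat.eq_zero_or_pos q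
    · simp [hg0]
    obtain hpk | hkp := lt_or_ge p k
    · simp [coeff_pow_eq_zero_of_lt hg0 hpk]
    have hT := Nat.add_mul_add_one_div_two p q
    have hp : p ≤ p * q := Nat.le_mul_of_pos_right p hq
    refine pow_mul_mem_of_le hν (a := (p * (p + 1) / 2 + 1 - k) + q * (q + 1) / 2)
      (by omega) ?_
    rw [pow_add, mul_mul_mul_comm]
    exact S.mul_mem (ih p (by omega)) (hg q (by omega))

end

theorem PowerSeries.pow_mul_coeff_mem_of_comp'_eq_X {A : Type*} [CommRing A] {S : Subring A}
    {ν : A} (hν : ν ∈ S) {F g : A⟦X⟧} (hF : ∀ k, coeff k F ∈ S) (hF1 : coeff 1 F = ν)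
    (hg0 : constantCoeff g = 0) (hFg : F.comp' g = X) (m : ℕ) :
    ν ^ (m * (m + 1) / 2) * coeff m g ∈ S := by
  induction m using Nat.strong_induction_on with
  | _ m ih =>
  obtain rfl | hm := Nat.eq_zero_or_pos m
  · simp [hg0]
  have hcoeff : ν * coeff m g =
      coeff m X - ∑ k ∈ (Finset.range (m + 1)).erase 1, coeff k F * coeff m (g ^ k) := by
    rw [← hFg, comp', coeff_mk,
      ← Finset.add_sum_erase _ _ (Finset.mem_range.2 (by omega : 1 < m + 1)), hF1, pow_one,
      add_sub_cancel_right]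
  have hT : 1 ≤ m * (m + 1) / 2 := Nat.div_pos (by nlinarith) two_pos
  rw [← Nat.sub_add_cancel hT, pow_succ, mul_assoc, hcoeff, mul_sub, Finset.mul_sum]
  refine S.sub_mem ?_ (S.sum_mem fun k hk => ?_)
  · rw [coeff_X]
    split_ifs
    · simpa using S.pow_mem hν _
    · simp
  obtain ⟨hk1, hkm⟩ : k ≠ 1 ∧ k < m + 1 := by simpa using hk
  obtain rfl | hk2 : k = 0 ∨ 2 ≤ k := by omega
  · simp [coeff_one, hm.ne']
  have hpow := pow_mul_coeff_pow_mem (S := S.toSubsemiring) hν hg0 (N := m - 1)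
    (fun j hj => ih j (by omega)) (by omega : 1 ≤ k) m (by omega)
  rw [mul_left_comm]
  exact S.mul_mem (hF k) (pow_mul_mem_of_le (S := S.toSubsemiring) hν (by omega) hpow)

theorem stmt3_denominator_bound_for_inverse_coefficients_general
    (R : Type*) [CommRing R]
    (n : ℕ) (f : PowerSeries R)
    (hf1 : PowerSeries.coeff (R := R) 1 f = (n : R))
    (g : PowerSeries (Localization.Away (n : R)))
    (hg0 : PowerSeries.constantCoeff (R := Localization.Away (n : R)) g = 0)
    (hfg : PowerSeries.comp'
      (PowerSeries.map (algebraMap R (Localization.Away (n : R))) f) g = PowerSeries.X) :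
    ∀ i : ℕ, 1 ≤ i → ∃ r : R,
      algebraMap R (Localization.Away (n : R)) r =
        (n : Localization.Away (n : R)) ^ (i * (i + 1) / 2) *
          PowerSeries.coeff (R := Localization.Away (n : R)) i g := by
  intro i _
  exact pow_mul_coeff_mem_of_comp'_eq_X (S := (algebraMap R (Localization.Away (n : R))).range)
    ⟨n, map_natCast _ n⟩ (fun k => ⟨coeff k f, by simp⟩)
    (by simp [hf1]) hg0 hfg i

/-- Let `R` be a torsion-free commutative ring, `n ≥ 1`, and
`f(u) = ∑_{i ≥ 1} a_i u^i ∈ R⟦u⟧` with `a₁ = n`.  If `g(u) = ∑_{i ≥ 1} b_i u^i`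
is the compositional inverse of `f` over `R ⊗ ℤ[1/n]` (the localization of `R`
away from `n`), then for every `i ≥ 1` the element `n^{i(i+1)/2} · b_i` lies in
the image of `R` in `R ⊗ ℤ[1/n]`. -/
theorem stmt3_denominator_bound_for_inverse_coefficients
    (R : Type*) [CommRing R] [NoZeroSMulDivisors ℤ R]
    (n : ℕ) (hn : 1 ≤ n) (f : PowerSeries R)
    (hf0 : PowerSeries.constantCoeff (R := R) f = 0)
    (hf1 : PowerSeries.coeff (R := R) 1 f = (n : R))
    (g : PowerSeries (Localization.Away (n : R)))
    (hg0 : PowerSeries.constantCoeff (R := Localization.Away (n : R)) g = 0)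
    (hfg : PowerSeries.comp'
      (PowerSeries.map (algebraMap R (Localization.Away (n : R))) f) g = PowerSeries.X)
    (hgf : PowerSeries.comp' g
      (PowerSeries.map (algebraMap R (Localization.Away (n : R))) f) = PowerSeries.X) :
    ∀ i : ℕ, 1 ≤ i → ∃ r : R,
      algebraMap R (Localization.Away (n : R)) r =
        (n : Localization.Away (n : R)) ^ (i * (i + 1) / 2) *
          PowerSeries.coeff (R := Localization.Away (n : R)) i g :=
  stmt3_denominator_bound_for_inverse_coefficients_general R n f hf1 g hg0 hfg
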